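/- Fix an index i. For every p ∈ ℝ^{m×d_t}, the Fréchet derivative DY_i(p) of the map p ↦ Y(p)_i, viewed as a linear map from ℝ^{m×d_t} with the Frobenius norm to ℝ^{d_v} with the Euclidean norm, satisfies the operator-norm bound ‖DY_i(p)‖ ≤ C₁ ‖p‖_F + C₂, where C₁ = ‖X_i W_Q‖₂ · ‖W_K‖_op · ‖W_V‖_op / √d and C₂ = ‖W_V‖_op, with X_i the i-th row of X. -/

import Mathlib

open scoped BigOperators
open Matrix

/-- Euclidean norm of a vector in `ℝ^k`. -/
noncomputable def euclNorm {k : ℕ} (v : Fin k → ℝ) : ℝ := Real.sqrt (∑ j, v j ^ 2)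

/-- Operator norm of a real matrix induced by the Euclidean norms. -/
noncomputable def matOpNorm {a b : ℕ} (M : Matrix (Fin a) (Fin b) ℝ) : ℝ :=
  ‖LinearMap.toContinuousLinearMap (Matrix.toEuclideanLin M)‖

/-- Softmax of a vector in `ℝ^k`. -/
noncomputable def softmaxV {k : ℕ} (v : Fin k → ℝ) : Fin k → ℝ :=
  fun j => Real.exp (v j) / ∑ l, Real.exp (v l)

section AuxOp
open scoped Matrix.Norms.L2Operator

lemma matOpNorm_eq_l2 {a b : ℕ} (M : Matrix (Fin a) (Fin b) ℝ) : matOpNorm M = ‖M‖ := rfl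

lemma matOpNorm_transpose {a b : ℕ} (M : Matrix (Fin a) (Fin b) ℝ) :
    matOpNorm Mᵀ = matOpNorm M := by
  rw [matOpNorm_eq_l2, matOpNorm_eq_l2, ← Matrix.conjTranspose_eq_transpose_of_trivial,
    Matrix.l2_opNorm_conjTranspose]

lemma matOpNorm_nonneg {a b : ℕ} (M : Matrix (Fin a) (Fin b) ℝ) : 0 ≤ matOpNorm M :=
  norm_nonneg _

lemma matOpNorm_mulVec {a b : ℕ} (M : Matrix (Fin a) (Fin b) ℝ) (x : EuclideanSpace ℝ (Fin b)) :
    ‖(Matrix.toEuclideanLin M x : EuclideanSpace ℝ (Fin a))‖ ≤ matOpNorm M * ‖x‖ := by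
  exact (LinearMap.toContinuousLinearMap (Matrix.toEuclideanLin M)).le_opNorm x

end AuxOp

lemma euclid_sum_apply {k mm : ℕ} (w : Fin mm → EuclideanSpace ℝ (Fin k)) (b : Fin k) :
    (∑ j, w j) b = ∑ j, w j b := by
  have h := map_sum (WithLp.linearEquiv 2 ℝ (Fin k → ℝ)) w Finset.univ
  have h2 := congrFun h b
  rw [Finset.sum_apply] at h2
  exact h2

lemma euclNorm_eq_norm {k : ℕ} (v : EuclideanSpace ℝ (Fin k)) : euclNorm v = ‖v‖ := by
  rw [EuclideanSpace.norm_eq]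
  simp [euclNorm, Real.norm_eq_abs, sq_abs]

lemma softmaxV_nonneg {k : ℕ} (v : Fin k → ℝ) (j : Fin k) : 0 ≤ softmaxV v j := by
  unfold softmaxV
  positivity

lemma softmaxV_sum {k : ℕ} (hk : 0 < k) (v : Fin k → ℝ) : ∑ j, softmaxV v j = 1 := by
  unfold softmaxV
  rw [← Finset.sum_div]
  exact div_self (ne_of_gt (Finset.sum_pos (fun l _ => Real.exp_pos _)
    (by simpa [Finset.univ_nonempty_iff] using Fin.pos_iff_nonempty.mp hk)))

/-- Identification of the derivative of a one-parameter softmax-attention family. -/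
lemma softmax_deriv_eq {m : ℕ} (hm : 0 < m) (c a v u : Fin m → ℝ) (L : ℝ)
    (hL : HasDerivAt (fun t : ℝ => ∑ j,
      (Real.exp (c j + t * a j) / ∑ l, Real.exp (c l + t * a l)) * (v j + t * u j)) L 0) :
    L = ∑ j, softmaxV c j * ((a j - ∑ l, softmaxV c l * a l) * v j + u j) := by
  set Z : ℝ := ∑ l, Real.exp (c l) with hZdef
  set Z' : ℝ := ∑ l, Real.exp (c l) * a l with hZ'def
  have hb : ∀ j, HasDerivAt (fun t : ℝ => c j + t * a j) (a j) 0 := by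
    intro j; simpa using ((hasDerivAt_id (0:ℝ)).mul_const (a j)).const_add (c j)
  have hE : ∀ j, HasDerivAt (fun t : ℝ => Real.exp (c j + t * a j)) (Real.exp (c j) * a j) 0 := by
    intro j; simpa using (hb j).exp
  have hZ : HasDerivAt (fun t : ℝ => ∑ l, Real.exp (c l + t * a l)) Z' 0 := by
    simpa [hZ'def] using HasDerivAt.fun_sum (u := Finset.univ) fun l _ => hE l
  have hZpos : (0:ℝ) < Z := Finset.sum_pos (fun l _ => Real.exp_pos _)
      (by simpa [Finset.univ_nonempty_iff] using Fin.pos_iff_nonempty.mp hm)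
  have hZ0 : (fun t : ℝ => ∑ l, Real.exp (c l + t * a l)) 0 ≠ 0 := by
    simpa [hZdef] using ne_of_gt hZpos
  have hdiv : ∀ j, HasDerivAt (fun t : ℝ =>
      Real.exp (c j + t * a j) / ∑ l, Real.exp (c l + t * a l))
      ((Real.exp (c j) * a j * Z - Real.exp (c j) * Z') / Z ^ 2) 0 := by
    intro j; simpa [← hZdef] using (hE j).fun_div hZ hZ0
  have hlinb : ∀ (x y : ℝ), HasDerivAt (fun t : ℝ => x + t * y) y 0 := by
    intro x y; simpa using ((hasDerivAt_id (0:ℝ)).mul_const y).const_add x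
  have hexp : HasDerivAt (fun t : ℝ => ∑ j,
      (Real.exp (c j + t * a j) / ∑ l, Real.exp (c l + t * a l)) * (v j + t * u j))
      (∑ j, ((Real.exp (c j) * a j * Z - Real.exp (c j) * Z') / Z ^ 2 * v j
        + Real.exp (c j) / Z * u j)) 0 := by
    refine HasDerivAt.fun_sum fun j _ => ?_
    have := (hdiv j).fun_mul (hlinb (v j) (u j))
    simpa [← hZdef] using this
  have hLe := hL.unique hexp
  rw [hLe]
  have habar : ∑ l, softmaxV c l * a l = Z' / Z := by
    rw [hZ'def, Finset.sum_div]
    exact Finset.sum_congr rfl fun l _ => by rw [softmaxV, ← hZdef]; ring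
  refine Finset.sum_congr rfl fun j _ => ?_
  rw [softmaxV, ← hZdef, habar]
  field_simp

/-- Weighted mean absolute deviation is at most the sup bound (via Cauchy–Schwarz). -/
lemma weighted_dev_le {m : ℕ} (s a : Fin m → ℝ) (Ca : ℝ) (hCa : 0 ≤ Ca)
    (hs0 : ∀ j, 0 ≤ s j) (hs1 : ∑ j, s j = 1) (ha : ∀ j, |a j| ≤ Ca) :
    ∑ j, s j * |a j - ∑ l, s l * a l| ≤ Ca := by
  set ab : ℝ := ∑ l, s l * a l with habar
  have hCS := Finset.sum_mul_sq_le_sq_mul_sq Finset.univ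
      (fun j => Real.sqrt (s j)) (fun j => Real.sqrt (s j) * |a j - ab|)
  have h1 : ∀ j, Real.sqrt (s j) * (Real.sqrt (s j) * |a j - ab|) = s j * |a j - ab| := by
    intro j; rw [← mul_assoc, Real.mul_self_sqrt (hs0 j)]
  have h2 : ∀ j, Real.sqrt (s j) ^ 2 = s j := fun j => Real.sq_sqrt (hs0 j)
  have h3 : ∀ j, (Real.sqrt (s j) * |a j - ab|) ^ 2 = s j * (a j - ab) ^ 2 := by
    intro j; rw [mul_pow, h2, sq_abs]
  simp only [h1, h2, h3] at hCS
  rw [hs1, one_mul] at hCS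
  have hvar : ∑ j, s j * (a j - ab) ^ 2 ≤ Ca ^ 2 := by
    have hexpand : ∑ j, s j * (a j - ab) ^ 2
        = ∑ j, s j * a j ^ 2 - ab ^ 2 := by
      have : ∀ j, s j * (a j - ab) ^ 2
          = s j * a j ^ 2 - 2 * ab * (s j * a j) + ab ^ 2 * s j := by intro j; ring
      simp only [this, Finset.sum_add_distrib, Finset.sum_sub_distrib, ← Finset.mul_sum]
      rw [← habar, hs1]
      ring
    have hsq : ∑ j, s j * a j ^ 2 ≤ Ca ^ 2 := by
      calc ∑ j, s j * a j ^ 2 ≤ ∑ j, s j * Ca ^ 2 := by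
            refine Finset.sum_le_sum fun j _ => ?_
            refine mul_le_mul_of_nonneg_left ?_ (hs0 j)
            rw [← sq_abs]
            exact pow_le_pow_left₀ (abs_nonneg _) (ha j) 2
        _ = Ca ^ 2 := by rw [← Finset.sum_mul, hs1, one_mul]
    nlinarith [sq_nonneg ab]
  have hnn : 0 ≤ ∑ j, s j * |a j - ab| :=
    Finset.sum_nonneg fun j _ => mul_nonneg (hs0 j) (abs_nonneg _)
  nlinarith

/-- Norm bound for the softmax-attention derivative expression. -/
lemma softmax_sum_norm_le {m : ℕ} {E : Type*} [NormedAddCommGroup E] [NormedSpace ℝ E]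
    (hm : 0 < m) (c a : Fin m → ℝ) (v u : Fin m → E) (Ca Cv Cu : ℝ)
    (hCa : 0 ≤ Ca) (hCv : 0 ≤ Cv) (ha : ∀ j, |a j| ≤ Ca)
    (hv : ∀ j, ‖v j‖ ≤ Cv) (hu : ∀ j, ‖u j‖ ≤ Cu) :
    ‖∑ j, softmaxV c j • ((a j - ∑ l, softmaxV c l * a l) • v j + u j)‖ ≤ Ca * Cv + Cu := by
  set s : Fin m → ℝ := softmaxV c with hsdef
  set ab : ℝ := ∑ l, s l * a l with habar
  have hs0 : ∀ j, 0 ≤ s j := softmaxV_nonneg c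
  have hs1 : ∑ j, s j = 1 := softmaxV_sum hm c
  calc ‖∑ j, s j • ((a j - ab) • v j + u j)‖
      ≤ ∑ j, ‖s j • ((a j - ab) • v j + u j)‖ := norm_sum_le _ _
    _ ≤ ∑ j, (s j * |a j - ab| * Cv + s j * Cu) := by
        refine Finset.sum_le_sum fun j _ => ?_
        rw [norm_smul, Real.norm_eq_abs, abs_of_nonneg (hs0 j)]
        calc s j * ‖(a j - ab) • v j + u j‖
            ≤ s j * (‖(a j - ab) • v j‖ + ‖u j‖) :=
              mul_le_mul_of_nonneg_left (norm_add_le _ _) (hs0 j)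
          _ ≤ s j * (|a j - ab| * Cv + Cu) := by
              refine mul_le_mul_of_nonneg_left (add_le_add ?_ (hu j)) (hs0 j)
              rw [norm_smul, Real.norm_eq_abs]
              exact mul_le_mul_of_nonneg_left (hv j) (abs_nonneg _)
          _ = s j * |a j - ab| * Cv + s j * Cu := by ring
    _ = (∑ j, s j * |a j - ab|) * Cv + (∑ j, s j) * Cu := by
        rw [Finset.sum_add_distrib, Finset.sum_mul, Finset.sum_mul]
    _ ≤ Ca * Cv + 1 * Cu := by
        rw [hs1]
        have := weighted_dev_le s a Ca hCa hs0 hs1 ha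
        have hCu : 0 ≤ Cu := le_trans (norm_nonneg _) (hu ⟨0, hm⟩)
        nlinarith [this]
    _ = Ca * Cv + Cu := by ring

attribute [local instance] Matrix.frobeniusNormedAddCommGroup Matrix.frobeniusNormedSpace

/-- The cross-attention map `S(p)`. -/
noncomputable def attnS {n m d dx dt : ℕ} (X : Matrix (Fin n) (Fin dx) ℝ)
    (WQ : Matrix (Fin dx) (Fin d) ℝ) (WK : Matrix (Fin dt) (Fin d) ℝ)
    (p : Matrix (Fin m) (Fin dt) ℝ) : Matrix (Fin n) (Fin m) ℝ :=
  Matrix.of fun i => softmaxV fun j => ((X * WQ) * (p * WK)ᵀ) i j / Real.sqrt d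

/-- The cross-attention output `Y(p) = S(p) · (p W_V)`. -/
noncomputable def attnY {n m d dx dt dv : ℕ} (X : Matrix (Fin n) (Fin dx) ℝ)
    (WQ : Matrix (Fin dx) (Fin d) ℝ) (WK : Matrix (Fin dt) (Fin d) ℝ)
    (WV : Matrix (Fin dt) (Fin dv) ℝ)
    (p : Matrix (Fin m) (Fin dt) ℝ) : Matrix (Fin n) (Fin dv) ℝ :=
  attnS X WQ WK p * (p * WV)

/-- A row of a matrix, as a Euclidean vector. -/
noncomputable def rowE {a b : ℕ} (M : Matrix (Fin a) (Fin b) ℝ) (j : Fin a) :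
    EuclideanSpace ℝ (Fin b) := WithLp.toLp 2 (fun t => M j t)

lemma rowE_norm_le {a b : ℕ} (M : Matrix (Fin a) (Fin b) ℝ) (j : Fin a) :
    ‖rowE M j‖ ≤ ‖M‖ := by
  rw [EuclideanSpace.norm_eq, Matrix.frobenius_norm_def]
  have h1 : (∑ i, ∑ t, ‖M i t‖ ^ (2:ℝ)) ^ ((1:ℝ)/2) =
      Real.sqrt (∑ i, ∑ t, ‖M i t‖ ^ 2) := by
    rw [Real.sqrt_eq_rpow]
    norm_num [Real.rpow_natCast]
  rw [h1]
  apply Real.sqrt_le_sqrt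
  have h2 : (∑ t, ‖rowE M j t‖ ^ 2) = ∑ t, ‖M j t‖ ^ 2 := rfl
  rw [h2]
  exact Finset.single_le_sum (f := fun i => ∑ t, ‖M i t‖ ^ 2)
    (fun i _ => Finset.sum_nonneg fun t _ => sq_nonneg _) (Finset.mem_univ j)

lemma row_mul_norm_le {a b c : ℕ} (M : Matrix (Fin a) (Fin b) ℝ)
    (W : Matrix (Fin b) (Fin c) ℝ) (j : Fin a) :
    ‖rowE (M * W) j‖ ≤ matOpNorm W * ‖M‖ := by
  have key : rowE (M * W) j = (Matrix.toEuclideanLin Wᵀ) (rowE M j) := by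
    ext bb
    simp [rowE, Matrix.toEuclideanLin_apply, Matrix.mulVec, Matrix.mul_apply, dotProduct,
      Matrix.transpose_apply, mul_comm]
  calc ‖rowE (M * W) j‖ = ‖(Matrix.toEuclideanLin Wᵀ) (rowE M j)‖ := by rw [key]
    _ ≤ matOpNorm Wᵀ * ‖rowE M j‖ := matOpNorm_mulVec _ _
    _ ≤ matOpNorm W * ‖M‖ := by
        rw [matOpNorm_transpose]
        exact mul_le_mul_of_nonneg_left (rowE_norm_le M j) (matOpNorm_nonneg W)

/-- For every `p`, the Fréchet derivative of `p ↦ Y(p)_i` (from `ℝ^{m×d_t}` with the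
Frobenius norm to `ℝ^{d_v}` with the Euclidean norm) has operator norm at most
`C₁ ‖p‖_F + C₂` where `C₁ = ‖X_i W_Q‖₂ ‖W_K‖_op ‖W_V‖_op / √d` and `C₂ = ‖W_V‖_op`. -/
theorem attnY_row_fderiv_opNorm_bound {n m d dx dt dv : ℕ}
    (hn : 0 < n) (hm : 0 < m) (hd : 0 < d) (hdx : 0 < dx) (hdt : 0 < dt) (hdv : 0 < dv)
    (X : Matrix (Fin n) (Fin dx) ℝ)
    (WQ : Matrix (Fin dx) (Fin d) ℝ) (WK : Matrix (Fin dt) (Fin d) ℝ)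
    (WV : Matrix (Fin dt) (Fin dv) ℝ)
    (i : Fin n) (p : Matrix (Fin m) (Fin dt) ℝ)
    (D : Matrix (Fin m) (Fin dt) ℝ →L[ℝ] EuclideanSpace ℝ (Fin dv))
    (hD : HasFDerivAt
        (fun q : Matrix (Fin m) (Fin dt) ℝ =>
          (WithLp.toLp 2 (fun b => attnY X WQ WK WV q i b) : EuclideanSpace ℝ (Fin dv))) D p) :
    @Norm.norm _ ContinuousLinearMap.hasOpNorm D ≤ euclNorm (fun l => (X * WQ) i l) * matOpNorm WK * matOpNorm WV / Real.sqrt d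
            * ‖p‖ + matOpNorm WV := by
  have hqnn : 0 ≤ euclNorm (fun l => (X * WQ) i l) := Real.sqrt_nonneg _
  have hKnn := matOpNorm_nonneg WK
  have hVnn := matOpNorm_nonneg WV
  have hsd : 0 < Real.sqrt d := Real.sqrt_pos.mpr (by exact_mod_cast hd)
  have hCnn : 0 ≤ euclNorm (fun l => (X * WQ) i l) * matOpNorm WK * matOpNorm WV /
      Real.sqrt d * ‖p‖ + matOpNorm WV := by positivity
  refine ContinuousLinearMap.opNorm_le_bound _ hCnn fun H => ?_
  set sc : Matrix (Fin m) (Fin dt) ℝ → Fin m → ℝ :=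
    fun r j => ((X * WQ) * (r * WK)ᵀ) i j / Real.sqrt d with hsc
  set c : Fin m → ℝ := sc p with hc
  set a : Fin m → ℝ := sc H with ha
  have hlin : ∀ t : ℝ, ∀ j, sc (p + t • H) j = c j + t * a j := by
    intro t j
    simp only [hsc, Matrix.add_mul, Matrix.smul_mul, Matrix.transpose_add,
      Matrix.transpose_smul, Matrix.mul_add, Matrix.mul_smul, Matrix.add_apply,
      Matrix.smul_apply, smul_eq_mul, add_div, mul_div_assoc]
    rfl
  have hline : HasDerivAt (fun t : ℝ => p + t • H) H 0 := by
    exact (((hasDerivAt_id (0:ℝ)).smul_const H).const_add p).congr_deriv (one_smul ℝ H)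
  have hF : HasDerivAt (fun t : ℝ =>
      (WithLp.toLp 2 (fun b => attnY X WQ WK WV (p + t • H) i b) : EuclideanSpace ℝ (Fin dv))) (D H) 0 := by
    have hD' : HasFDerivAt
        (fun q : Matrix (Fin m) (Fin dt) ℝ =>
          (WithLp.toLp 2 (fun b => attnY X WQ WK WV q i b) : EuclideanSpace ℝ (Fin dv))) D
        (p + (0:ℝ) • H) := by
      rw [show p + (0:ℝ) • H = p by simp]; exact hD
    exact hD'.comp_hasDerivAt 0 hline
  have hcomp : ∀ b, D H b = ∑ j, softmaxV c j *
      ((a j - ∑ l, softmaxV c l * a l) * (p * WV) j b + (H * WV) j b) := by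
    intro b
    have hFb : HasDerivAt (fun t : ℝ => attnY X WQ WK WV (p + t • H) i b) (D H b) 0 := by
      have := (EuclideanSpace.proj b).hasFDerivAt.comp_hasDerivAt 0 hF
      simpa [Function.comp_def] using this
    have hfun : (fun t : ℝ => attnY X WQ WK WV (p + t • H) i b) = fun t : ℝ => ∑ j,
        (Real.exp (c j + t * a j) / ∑ l, Real.exp (c l + t * a l)) *
          ((p * WV) j b + t * (H * WV) j b) := by
      funext t
      have h1 : ∀ j, ((p + t • H) * WV) j b = (p * WV) j b + t * (H * WV) j b := by
        intro j
        simp [Matrix.add_mul, Matrix.smul_mul, Matrix.add_apply, Matrix.smul_apply]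
      simp only [attnY, attnS, Matrix.mul_apply, Matrix.of_apply, softmaxV]
      refine Finset.sum_congr rfl fun j _ => ?_
      rw [← Matrix.mul_apply, h1 j]
      congr 1
      congr 1
      · exact congrArg Real.exp (hlin t j)
      · exact Finset.sum_congr rfl fun l _ => congrArg Real.exp (hlin t l)
    rw [hfun] at hFb
    exact softmax_deriv_eq hm c a (fun j => (p * WV) j b) (fun j => (H * WV) j b) _ hFb
  have hDW : D H = ∑ j, softmaxV c j •
      ((a j - ∑ l, softmaxV c l * a l) • rowE (p * WV) j + rowE (H * WV) j) := by
    ext b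
    rw [hcomp b, euclid_sum_apply]
    rfl
  refine (le_of_eq (congrArg norm hDW)).trans ?_
  have hbound := softmax_sum_norm_le hm c a (fun j => rowE (p * WV) j)
    (fun j => rowE (H * WV) j)
    (euclNorm (fun l => (X * WQ) i l) * matOpNorm WK / Real.sqrt d * ‖H‖)
    (matOpNorm WV * ‖p‖) (matOpNorm WV * ‖H‖)
    (by positivity) (by positivity)
    ?_ (fun j => row_mul_norm_le p WV j) (fun j => row_mul_norm_le H WV j)
  · calc ‖∑ j, softmaxV c j •
        ((a j - ∑ l, softmaxV c l * a l) • rowE (p * WV) j + rowE (H * WV) j)‖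
        ≤ euclNorm (fun l => (X * WQ) i l) * matOpNorm WK / Real.sqrt d * ‖H‖ *
            (matOpNorm WV * ‖p‖) + matOpNorm WV * ‖H‖ := hbound
      _ = (euclNorm (fun l => (X * WQ) i l) * matOpNorm WK * matOpNorm WV / Real.sqrt d
            * ‖p‖ + matOpNorm WV) * ‖H‖ := by ring
  · -- the bound |a j| ≤ ‖q‖ ‖W_K‖ / √d * ‖H‖
    intro j
    have hinner : ((X * WQ) * (H * WK)ᵀ) i j
        = ∑ l, (rowE (X * WQ) i) l * (rowE (H * WK) j) l := by
      simp only [Matrix.mul_apply, rowE, Matrix.transpose_apply]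
    have hCS : |∑ l, (rowE (X * WQ) i) l * (rowE (H * WK) j) l|
        ≤ ‖rowE (X * WQ) i‖ * ‖rowE (H * WK) j‖ := by
      have h := abs_real_inner_le_norm (rowE (X * WQ) i) (rowE (H * WK) j)
      have h2 : (inner ℝ (rowE (X * WQ) i) (rowE (H * WK) j) : ℝ)
          = ∑ l, (rowE (X * WQ) i) l * (rowE (H * WK) j) l := by
        simp [PiLp.inner_apply, RCLike.inner_apply, mul_comm]
      rwa [h2] at h
    have heq : euclNorm (fun l => (X * WQ) i l) = ‖rowE (X * WQ) i‖ :=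
      euclNorm_eq_norm (rowE (X * WQ) i)
    have haj : |a j| = |((X * WQ) * (H * WK)ᵀ) i j| / Real.sqrt d := by
      rw [ha, hsc]
      rw [abs_div, abs_of_pos hsd]
    rw [haj, hinner]
    calc |∑ l, (rowE (X * WQ) i) l * (rowE (H * WK) j) l| / Real.sqrt d
        ≤ ‖rowE (X * WQ) i‖ * ‖rowE (H * WK) j‖ / Real.sqrt d := by
          exact div_le_div_of_nonneg_right hCS hsd.le
      _ ≤ ‖rowE (X * WQ) i‖ * (matOpNorm WK * ‖H‖) / Real.sqrt d := by
          apply div_le_div_of_nonneg_right _ hsd.le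
          exact mul_le_mul_of_nonneg_left (row_mul_norm_le H WK j) (norm_nonneg _)
      _ = euclNorm (fun l => (X * WQ) i l) * matOpNorm WK / Real.sqrt d * ‖H‖ := by
          rw [heq]; ring
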